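/- (Second factorization of the Ruelle zeta function.) Let m ∈ ℕ and s ∈ ℂ with Re(s) > 2 + m/2, and define Z_{ρ_m}(k, w) := ∏_{l=0}^{m} Z(m − 2l + k, w − m/2 + l) for k ∈ ℤ. Then Z_{ρ_m}(2, s + 1) and Z_{ρ_m}(−2, s + 1) are nonzero, and ∏_{l=0}^{m} R(m − 2l, s − m/2 + l) = ( Z_{ρ_m}(0, s) · Z_{ρ_m}(0, s + 2) ) / ( Z_{ρ_m}(2, s + 1) · Z_{ρ_m}(−2, s + 1) ). -/

import Mathlib

/-!
Write `Zs k w = ∏ (1 - t_{k,w}(i, p, q))` with `t = selbergTerm`. The shifts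
`t_{k,w}(i, p, q + 1) = t_{k+2,w+1}(i, p, q)` and `t_{k,w}(i, p + 1, q) = t_{k-2,w+1}(i, p, q)`
show that splitting off the factors with `q = 0` gives `Zs k w = A k w · Zs (k+2) (w+1)` with
`A = ZsQZero`, and splitting those further at `p = 0` gives `A k w = Rz k w · A (k-2) (w+1)`.
Eliminating `A` yields `Rz k w · Zs (k+2) (w+1) · Zs (k-2) (w+1) = Zs k w · Zs k (w+2)`, and the
theorem is the product of these identities over the weights of `ρ_m`. All rearrangements are
legitimate because `|t_{k,w}(i, p, q)| = e^{-(p + q + Re w) ℓ_i}` is summable once `Re w ≥ δ`: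
the summability of `e^{-δ ℓ_i}` forces `ℓ_i → ∞`, so the lengths are bounded below by a positive
constant.
-/

/-- `R(σ_k, s) = ∏_{i ∈ I} (1 − e^{i(k/2)θ_i} e^{−s ℓ_i})`. -/
noncomputable def Rz {I : Type*} (ℓ θ : I → ℝ) (k : ℤ) (s : ℂ) : ℂ :=
  ∏' i : I, (1 - Complex.exp (Complex.I * ((k : ℂ) / 2) * (θ i : ℂ))
    * Complex.exp (-s * (ℓ i : ℂ)))

/-- Selberg zeta function
`Z(σ_k, s) = ∏_{i ∈ I} ∏_{p,q ≥ 0} (1 − e^{i(k/2)θ_i} e^{−p(ℓ_i+iθ_i)} e^{−q(ℓ_i−iθ_i)} e^{−s ℓ_i})`. -/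
noncomputable def Zs {I : Type*} (ℓ θ : I → ℝ) (k : ℤ) (s : ℂ) : ℂ :=
  ∏' x : I × ℕ × ℕ,
    (1 - Complex.exp (Complex.I * ((k : ℂ) / 2) * (θ x.1 : ℂ))
       * Complex.exp (-(x.2.1 : ℂ) * ((ℓ x.1 : ℂ) + Complex.I * (θ x.1 : ℂ)))
       * Complex.exp (-(x.2.2 : ℂ) * ((ℓ x.1 : ℂ) - Complex.I * (θ x.1 : ℂ)))
       * Complex.exp (-s * (ℓ x.1 : ℂ)))

open Complex Filter Function Set

section ProductSplitting

variable {α β γ₁ γ₂ : Type*}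

theorem tprod_eq_mul_of_isCompl_range [CommMonoid α] [TopologicalSpace α] [ContinuousMul α]
    [T2Space α] {f : β → α} {g₁ : γ₁ → β} {g₂ : γ₂ → β} (hg₁ : Injective g₁)
    (hg₂ : Injective g₂) (hg : IsCompl (range g₁) (range g₂)) (hf₁ : Multipliable (f ∘ g₁))
    (hf₂ : Multipliable (f ∘ g₂)) :
    ∏' x, f x = (∏' c, f (g₁ c)) * ∏' c, f (g₂ c) :=
  ((hg₁.hasProd_range_iff.mpr hf₁.hasProd).mul_isCompl hg
    (hg₂.hasProd_range_iff.mpr hf₂.hasProd)).tprod_eq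

theorem tprod_one_sub_eq_mul_of_isCompl_range {f : β → ℂ} (hf : Summable f) {g₁ : γ₁ → β}
    {g₂ : γ₂ → β} (hg₁ : Injective g₁) (hg₂ : Injective g₂)
    (hg : IsCompl (range g₁) (range g₂)) :
    ∏' x, (1 - f x) = (∏' c, (1 - f (g₁ c))) * ∏' c, (1 - f (g₂ c)) := by
  refine tprod_eq_mul_of_isCompl_range (f := fun x => 1 - f x) hg₁ hg₂ hg ?_ ?_ <;>
  · simpa only [sub_eq_add_neg, comp_def] using Complex.multipliable_one_add_of_summable
      (hf.comp_injective ‹_›).neg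

end ProductSplitting

section LengthSpectrum

variable {ι : Type*} {ℓ : ι → ℝ} {δ : ℝ}

theorem tendsto_cofinite_atTop_of_summable_exp (hℓ : ∀ i, 0 < ℓ i)
    (hsum : Summable fun i => Real.exp (-δ * ℓ i)) : Tendsto ℓ cofinite atTop := by
  have hzero := hsum.tendsto_cofinite_zero
  rcases lt_or_ge 0 δ with hδ | hδ
  · exact (tendsto_const_mul_atBot_of_neg (neg_lt_zero.mpr hδ)).mp
      (Real.tendsto_exp_comp_nhds_zero.mp hzero)
  · -- every term is `≥ 1`, so `ι` is finite and `cofinite = ⊥`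
    have hbot : ∀ᶠ i in cofinite, False := (hzero.eventually (gt_mem_nhds one_pos)).mono
      fun i hi => (Real.one_le_exp (by nlinarith [hℓ i])).not_gt hi
    rw [eventually_false_iff_eq_bot.mp hbot]
    exact tendsto_bot

theorem exists_pos_forall_le_of_summable_exp (hℓ : ∀ i, 0 < ℓ i)
    (hsum : Summable fun i => Real.exp (-δ * ℓ i)) : ∃ c > 0, ∀ i, c ≤ ℓ i := by
  cases isEmpty_or_nonempty ι
  · exact ⟨1, one_pos, isEmptyElim⟩
  obtain ⟨j, hj⟩ := (tendsto_cofinite_atTop_of_summable_exp hℓ hsum).exists_forall_le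
  exact ⟨ℓ j, hℓ j, hj⟩

theorem summable_exp_mul_pow_mul_pow (hℓ : ∀ i, 0 < ℓ i)
    (hsum : Summable fun i => Real.exp (-δ * ℓ i)) {a : ℝ} (ha : δ ≤ a) :
    Summable fun x : ι × ℕ × ℕ =>
      Real.exp (-a * ℓ x.1) * Real.exp (-ℓ x.1) ^ x.2.1 * Real.exp (-ℓ x.1) ^ x.2.2 := by
  obtain ⟨c, hc, hcℓ⟩ := exists_pos_forall_le_of_summable_exp hℓ hsum
  have hgeom : Summable fun n : ℕ => Real.exp (-c) ^ n :=
    summable_geometric_of_lt_one (Real.exp_nonneg _) (Real.exp_lt_one_iff.mpr (by linarith))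
  have hmajorant : Summable fun x : ι × ℕ × ℕ =>
      Real.exp (-δ * ℓ x.1) * (Real.exp (-c) ^ x.2.1 * Real.exp (-c) ^ x.2.2) :=
    hsum.mul_of_nonneg (hgeom.mul_of_nonneg hgeom (fun _ => by positivity) fun _ => by positivity)
      (fun _ => by positivity) fun _ => by positivity
  refine hmajorant.of_nonneg_of_le (fun _ => by positivity) fun ⟨i, p, q⟩ => ?_
  have hδa : Real.exp (-a * ℓ i) ≤ Real.exp (-δ * ℓ i) := by
    gcongr
    nlinarith [hℓ i]
  have hci : Real.exp (-ℓ i) ≤ Real.exp (-c) := by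
    gcongr
    exact hcℓ i
  rw [← mul_assoc]
  gcongr

end LengthSpectrum

section SelbergZeta

variable {ι : Type*} (ℓ θ : ι → ℝ)

noncomputable def selbergTerm (k : ℤ) (w : ℂ) (x : ι × ℕ × ℕ) : ℂ :=
  exp (I * ((k : ℂ) / 2) * (θ x.1 : ℂ))
    * exp (-(x.2.1 : ℂ) * ((ℓ x.1 : ℂ) + I * (θ x.1 : ℂ)))
    * exp (-(x.2.2 : ℂ) * ((ℓ x.1 : ℂ) - I * (θ x.1 : ℂ)))
    * exp (-w * (ℓ x.1 : ℂ))

theorem Zs_eq_tprod_selbergTerm (k : ℤ) (w : ℂ) :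
    Zs ℓ θ k w = ∏' x, (1 - selbergTerm ℓ θ k w x) := rfl

noncomputable def ZsQZero (k : ℤ) (w : ℂ) : ℂ :=
  ∏' y : ι × ℕ, (1 - selbergTerm ℓ θ k w (y.1, y.2, 0))

theorem selbergTerm_zero_zero (k : ℤ) (w : ℂ) (i : ι) :
    selbergTerm ℓ θ k w (i, 0, 0) =
      exp (I * ((k : ℂ) / 2) * (θ i : ℂ)) * exp (-w * (ℓ i : ℂ)) := by
  simp [selbergTerm]

theorem selbergTerm_succ_left (k : ℤ) (w : ℂ) (i : ι) (p q : ℕ) :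
    selbergTerm ℓ θ k w (i, p + 1, q) = selbergTerm ℓ θ (k - 2) (w + 1) (i, p, q) := by
  simp only [selbergTerm, ← exp_add]
  push_cast
  ring_nf

theorem selbergTerm_succ_right (k : ℤ) (w : ℂ) (i : ι) (p q : ℕ) :
    selbergTerm ℓ θ k w (i, p, q + 1) = selbergTerm ℓ θ (k + 2) (w + 1) (i, p, q) := by
  simp only [selbergTerm, ← exp_add]
  push_cast
  ring_nf

theorem norm_selbergTerm (k : ℤ) (w : ℂ) (x : ι × ℕ × ℕ) :
    ‖selbergTerm ℓ θ k w x‖ =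
      Real.exp (-w.re * ℓ x.1) * Real.exp (-ℓ x.1) ^ x.2.1 * Real.exp (-ℓ x.1) ^ x.2.2 := by
  simp only [selbergTerm, norm_mul, norm_exp, ← Real.exp_nat_mul, ← Real.exp_add, Real.exp_eq_exp]
  simp only [add_re, sub_re, mul_re, neg_re, neg_im, I_re, I_im, ofReal_re, ofReal_im, natCast_re,
    natCast_im, div_ofNat_re, div_ofNat_im, intCast_re, intCast_im]
  ring
variable {ℓ θ} {δ : ℝ} (hℓ : ∀ i, 0 < ℓ i)
  (hsum : Summable fun i => Real.exp (-δ * ℓ i))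
include hℓ hsum

theorem summable_selbergTerm (k : ℤ) {w : ℂ} (hw : δ ≤ w.re) :
    Summable (selbergTerm ℓ θ k w) :=
  .of_norm <| by simpa only [norm_selbergTerm] using summable_exp_mul_pow_mul_pow hℓ hsum hw

theorem Zs_ne_zero (k : ℤ) {w : ℂ} (hw : δ ≤ w.re) (hw₀ : 0 < w.re) : Zs ℓ θ k w ≠ 0 := by
  have hlt (x : ι × ℕ × ℕ) : ‖selbergTerm ℓ θ k w x‖ < 1 := by
    rw [norm_selbergTerm]
    have h₁ : Real.exp (-w.re * ℓ x.1) < 1 := Real.exp_lt_one_iff.mpr (by nlinarith [hℓ x.1])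
    have h₂ : Real.exp (-ℓ x.1) ≤ 1 := Real.exp_le_one_iff.mpr (by linarith [hℓ x.1])
    exact mul_lt_one_of_nonneg_of_lt_one_left (by positivity)
      (mul_lt_one_of_nonneg_of_lt_one_left (by positivity) h₁ (pow_le_one₀ (by positivity) h₂))
      (pow_le_one₀ (by positivity) h₂)
  simpa only [Zs_eq_tprod_selbergTerm, sub_eq_add_neg] using
    tprod_one_add_ne_zero_of_summable (f := fun x => -selbergTerm ℓ θ k w x)
      (fun x h => (hlt x).ne (by rw [← sub_eq_add_neg, sub_eq_zero] at h; simp [← h]))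
      (by simpa only [norm_neg] using (summable_selbergTerm hℓ hsum k hw).norm)

theorem Zs_eq_ZsQZero_mul (k : ℤ) {w : ℂ} (hw : δ ≤ w.re) :
    Zs ℓ θ k w = ZsQZero ℓ θ k w * Zs ℓ θ (k + 2) (w + 1) := by
  rw [Zs_eq_tprod_selbergTerm, tprod_one_sub_eq_mul_of_isCompl_range
    (summable_selbergTerm hℓ hsum k hw) (g₁ := fun y : ι × ℕ => (y.1, y.2, 0))
    (g₂ := fun x : ι × ℕ × ℕ => (x.1, x.2.1, x.2.2 + 1)) ?inj₁ ?inj₂ ?compl]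
  · simp only [ZsQZero, Zs_eq_tprod_selbergTerm, selbergTerm_succ_right]
  case inj₁ => intro a b h; simp_all [Prod.ext_iff]
  case inj₂ => intro a b h; simp_all [Prod.ext_iff]
  case compl =>
    refine eq_compl_iff_isCompl.mp (Set.ext fun ⟨i, p, q⟩ => ?_)
    cases q <;> simp

theorem ZsQZero_eq_Rz_mul (k : ℤ) {w : ℂ} (hw : δ ≤ w.re) :
    ZsQZero ℓ θ k w = Rz ℓ θ k w * ZsQZero ℓ θ (k - 2) (w + 1) := by
  have hsummable : Summable fun y : ι × ℕ => selbergTerm ℓ θ k w (y.1, y.2, 0) :=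
    (summable_selbergTerm hℓ hsum k hw).comp_injective fun a b h => by simp_all [Prod.ext_iff]
  rw [ZsQZero, tprod_one_sub_eq_mul_of_isCompl_range hsummable (g₁ := fun i : ι => (i, 0))
    (g₂ := fun y : ι × ℕ => (y.1, y.2 + 1)) ?inj₁ ?inj₂ ?compl]
  · simp only [Rz, ZsQZero, selbergTerm_zero_zero, selbergTerm_succ_left]
  case inj₁ => intro a b h; simp_all [Prod.ext_iff]
  case inj₂ => intro a b h; simp_all [Prod.ext_iff]
  case compl =>
    refine eq_compl_iff_isCompl.mp (Set.ext fun ⟨i, p⟩ => ?_)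
    cases p <;> simp

theorem Rz_mul_Zs_mul_Zs (k : ℤ) {w : ℂ} (hw : δ ≤ w.re) :
    Rz ℓ θ k w * (Zs ℓ θ (k + 2) (w + 1) * Zs ℓ θ (k - 2) (w + 1)) =
      Zs ℓ θ k w * Zs ℓ θ k (w + 2) := by
  have hw₁ : δ ≤ (w + 1).re := by rw [add_re, one_re]; linarith
  have h := Zs_eq_ZsQZero_mul hℓ hsum (θ := θ) (k - 2) hw₁
  rw [sub_add_cancel, add_assoc, one_add_one_eq_two] at h
  rw [Zs_eq_ZsQZero_mul hℓ hsum k hw, ZsQZero_eq_Rz_mul hℓ hsum k hw, h]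
  ring

end SelbergZeta

theorem statement7_general {I : Type*} (ℓ θ : I → ℝ)
    (hℓ : ∀ i, 0 < ℓ i) (δ : ℝ) (hδ : δ < 2)
    (hsum : Summable fun i => Real.exp (-δ * ℓ i))
    (m : ℕ) (s : ℂ) (hs : 2 + (m : ℝ) / 2 < s.re)
    (Zρ : ℤ → ℂ → ℂ)
    (hZρ : ∀ (k : ℤ) (w : ℂ), Zρ k w =
      ∏ l ∈ Finset.range (m + 1),
        Zs ℓ θ ((m : ℤ) - 2 * (l : ℤ) + k) (w - (m : ℂ) / 2 + (l : ℂ))) :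
    Zρ 2 (s + 1) ≠ 0 ∧
    Zρ (-2) (s + 1) ≠ 0 ∧
    (∏ l ∈ Finset.range (m + 1),
        Rz ℓ θ ((m : ℤ) - 2 * (l : ℤ)) (s - (m : ℂ) / 2 + (l : ℂ))) =
      (Zρ 0 s * Zρ 0 (s + 2)) / (Zρ 2 (s + 1) * Zρ (-2) (s + 1)) := by
  have hre (l : ℕ) : 2 < (s - (m : ℂ) / 2 + l).re := by
    have : (0 : ℝ) ≤ l := l.cast_nonneg
    simp only [add_re, sub_re, div_ofNat_re, natCast_re]
    linarith
  have hZρ_ne (k : ℤ) : Zρ k (s + 1) ≠ 0 := by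
    rw [hZρ]
    refine Finset.prod_ne_zero_iff.mpr fun l _ => Zs_ne_zero hℓ hsum _ ?_ ?_ <;>
    · rw [add_sub_right_comm, add_right_comm, add_re, one_re]
      linarith [hre l]
  refine ⟨hZρ_ne 2, hZρ_ne (-2), ?_⟩
  rw [eq_div_iff (mul_ne_zero (hZρ_ne 2) (hZρ_ne (-2))), hZρ, hZρ, hZρ, hZρ,
    ← Finset.prod_mul_distrib, ← Finset.prod_mul_distrib, ← Finset.prod_mul_distrib]
  refine Finset.prod_congr rfl fun l _ => ?_
  rw [show s + 1 - (m : ℂ) / 2 + l = s - m / 2 + l + 1 by ring,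
    show s + 2 - (m : ℂ) / 2 + l = s - m / 2 + l + 2 by ring, add_zero, ← sub_eq_add_neg]
  exact Rz_mul_Zs_mul_Zs hℓ hsum _ (hδ.le.trans (hre l).le)

/-- second factorization of the Ruelle zeta function,
`R_{ρ_m}(s) = Z_{ρ_m}(σ_0, s) Z_{ρ_m}(σ_0, s+2) / (Z_{ρ_m}(σ_2, s+1) Z_{ρ_m}(σ_{−2}, s+1))`. -/
theorem statement7 {I : Type*} [Countable I] (ℓ θ : I → ℝ)
    (hℓ : ∀ i, 0 < ℓ i) (δ : ℝ) (hδ : δ < 2)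
    (hsum : Summable fun i => Real.exp (-δ * ℓ i))
    (m : ℕ) (s : ℂ) (hs : 2 + (m : ℝ) / 2 < s.re)
    (Zρ : ℤ → ℂ → ℂ)
    (hZρ : ∀ (k : ℤ) (w : ℂ), Zρ k w =
      ∏ l ∈ Finset.range (m + 1),
        Zs ℓ θ ((m : ℤ) - 2 * (l : ℤ) + k) (w - (m : ℂ) / 2 + (l : ℂ))) :
    Zρ 2 (s + 1) ≠ 0 ∧
    Zρ (-2) (s + 1) ≠ 0 ∧
    (∏ l ∈ Finset.range (m + 1),
        Rz ℓ θ ((m : ℤ) - 2 * (l : ℤ)) (s - (m : ℂ) / 2 + (l : ℂ))) =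
      (Zρ 0 s * Zρ 0 (s + 2)) / (Zρ 2 (s + 1) * Zρ (-2) (s + 1)) :=
  statement7_general ℓ θ hℓ δ hδ hsum m s hs Zρ hZρ
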